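/- Let (X,G) be a complete G-metric space and let T : X → X satisfy G(Tx,Ty,Tz) ≤ α·G(x,y,z) + β·(G(y,Ty,Ty) + G(z,Tz,Tz) + G(x,Tx,Tx)) for all x,y,z ∈ X, where α,β are nonnegative real numbers with α + 3β < 1. Then T has a unique fixed point u ∈ X (Tu = u), and T is G-continuous at u. -/

import Mathlib

open Filter Topology

/-- A G-metric on a set `X` (Mustafa–Sims). The symmetry axiom (G5) is recorded via
the two generating permutations (swap of last two arguments and a cyclic shift),
from which all six equalities of (G5) follow. -/
structure GMetricStruct (X : Type*) where
  G : X → X → X → ℝ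
  nonneg : ∀ x y z, 0 ≤ G x y z
  eq_zero_of_eq : ∀ x y z, x = y → y = z → G x y z = 0
  pos_of_ne : ∀ x y, x ≠ y → 0 < G x x y
  le_of_ne : ∀ x y z, z ≠ y → G x x y ≤ G x y z
  symm_swap : ∀ x y z, G x y z = G x z y
  symm_cycle : ∀ x y z, G x y z = G y z x
  rect : ∀ x y z a, G x y z ≤ G x a a + G a y z

/-- A convex structure `W` on a G-metric space `(X, G)`:
for all `x, y, u, v` and `λ, β ∈ [0,1]` with `λ + β = 1`,
`G(W(x,y;λ,β), u, v) ≤ λ·G(x,u,v) + β·G(y,u,v)`. -/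
def IsConvexStructure {X : Type*} (GM : GMetricStruct X) (W : X → X → ℝ → ℝ → X) : Prop :=
  ∀ x y u v : X, ∀ lam beta : ℝ, lam ∈ Set.Icc (0:ℝ) 1 → beta ∈ Set.Icc (0:ℝ) 1 →
    lam + beta = 1 →
    GM.G (W x y lam beta) u v ≤ lam * GM.G x u v + beta * GM.G y u v

/-- A sequence `x` G-converges to `l` iff `G(x_n, x_n, l) → 0`. -/
def GConvergesTo {X : Type*} (GM : GMetricStruct X) (x : ℕ → X) (l : X) : Prop :=
  Tendsto (fun n => GM.G (x n) (x n) l) atTop (𝓝 0)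

/-- A sequence `x` is G-Cauchy iff `G(x_n, x_m, x_l) → 0` as `n, m, l → ∞`. -/
def GCauchySeq {X : Type*} (GM : GMetricStruct X) (x : ℕ → X) : Prop :=
  ∀ ε : ℝ, 0 < ε → ∃ N : ℕ, ∀ n ≥ N, ∀ m ≥ N, ∀ l ≥ N, GM.G (x n) (x m) (x l) < ε

/-- A G-metric space is complete iff every G-Cauchy sequence G-converges. -/
def GComplete {X : Type*} (GM : GMetricStruct X) : Prop :=
  ∀ x : ℕ → X, GCauchySeq GM x → ∃ l : X, GConvergesTo GM x l

/-- `T` is G-continuous at `u` iff it maps sequences G-converging to `u`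
to sequences G-converging to `T u`. -/
def GContinuousAt {X : Type*} (GM : GMetricStruct X) (T : X → X) (u : X) : Prop :=
  ∀ y : ℕ → X, GConvergesTo GM y u → GConvergesTo GM (fun n => T (y n)) (T u)

/-!
Take `y = z = T x` in the contraction condition: along the Picard iterates `xₙ = Tⁿ x₀` the
displacements `G(xₙ, xₙ₊₁, xₙ₊₁)` shrink by the factor `q = (a + β) / (1 - 2β) < 1`, so the
rectangle inequality makes `(xₙ)` G-Cauchy. Its limit `u` is fixed: the condition at `(xₙ, u, u)`
bounds `(1 - 2β) G(u, Tu, Tu)` by quantities tending to `0`. At `(v, v, u)` for two fixed points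
all `β`-terms vanish, leaving `G(v, v, u) ≤ a G(v, v, u)`; at `(y, y, u)` it gives continuity at `u`
once `G(y, Ty, Ty) → 0` is read off from the condition at `(u, y, y)`.
-/

namespace GMetricStruct

variable {X : Type*} (GM : GMetricStruct X)

theorem G_self (x : X) : GM.G x x x = 0 :=
  GM.eq_zero_of_eq x x x rfl rfl

theorem G_comm_left (x y : X) : GM.G x y y = GM.G y y x :=
  GM.symm_cycle x y y

theorem G_le_two_mul (x y : X) : GM.G x x y ≤ 2 * GM.G x y y := by
  have h := GM.rect x x y y
  rw [GM.symm_cycle y x y] at h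
  linarith

theorem eq_of_G_nonpos {x y : X} (h : GM.G x x y ≤ 0) : x = y := by
  by_contra hne
  exact (GM.pos_of_ne x y hne).not_ge h

theorem G_le_add_add (x y z w : X) :
    GM.G x y z ≤ GM.G x w w + GM.G y w w + GM.G z w w := by
  have h₁ := GM.rect x y z w
  have h₂ := GM.rect y z w w
  rw [GM.symm_cycle w y z] at h₁
  rw [GM.symm_cycle w z w] at h₂
  linarith

theorem G_le_two_mul_add (x y z w : X) :
    GM.G x y z ≤ 2 * (GM.G w x x + GM.G w y y + GM.G w z z) := by
  have := GM.G_le_add_add x y z w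
  rw [GM.G_comm_left x w, GM.G_comm_left y w, GM.G_comm_left z w] at this
  linarith [GM.G_le_two_mul w x, GM.G_le_two_mul w y, GM.G_le_two_mul w z]

theorem G_le_sum_Ico (x : ℕ → X) {n m : ℕ} (hnm : n ≤ m) :
    GM.G (x n) (x m) (x m) ≤ ∑ i ∈ Finset.Ico n m, GM.G (x i) (x (i + 1)) (x (i + 1)) := by
  induction m, hnm using Nat.le_induction with
  | base => simp [G_self]
  | succ m hnm ih =>
    rw [Finset.sum_Ico_succ_top hnm]
    linarith [GM.rect (x n) (x (m + 1)) (x (m + 1)) (x m)]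

theorem gCauchySeq_of_G_le {x : ℕ → X} {b : ℕ → ℝ} (hb : Tendsto b atTop (𝓝 0))
    (hx : ∀ N n, N ≤ n → GM.G (x N) (x n) (x n) ≤ b N) : GCauchySeq GM x := by
  intro ε hε
  obtain ⟨N, hN⟩ :=
    (hb.eventually (gt_mem_nhds (by positivity : 0 < ε / 6))).exists_forall_of_atTop
  refine ⟨N, fun n hn m hm l hl => ?_⟩
  have := GM.G_le_two_mul_add (x n) (x m) (x l) (x N)
  linarith [hx N n hn, hx N m hm, hx N l hl, hN N le_rfl]

theorem gCauchySeq_of_G_succ_le_geometric {x : ℕ → X} {C q : ℝ} (hq₀ : 0 ≤ q) (hq₁ : q < 1)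
    (hx : ∀ n, GM.G (x n) (x (n + 1)) (x (n + 1)) ≤ C * q ^ n) : GCauchySeq GM x := by
  refine GM.gCauchySeq_of_G_le (b := fun N => C * (q ^ N / (1 - q))) ?_ fun N n hNn => ?_
  · simpa using ((tendsto_pow_atTop_nhds_zero_of_lt_one hq₀ hq₁).div_const (1 - q)).const_mul C
  · have hC : 0 ≤ C := by simpa using (GM.nonneg _ _ _).trans (hx 0)
    calc GM.G (x N) (x n) (x n)
        ≤ ∑ i ∈ Finset.Ico N n, C * q ^ i :=
          (GM.G_le_sum_Ico x hNn).trans (Finset.sum_le_sum fun i _ => hx i)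
      _ = C * ∑ i ∈ Finset.Ico N n, q ^ i := (Finset.mul_sum ..).symm
      _ ≤ C * (q ^ N / (1 - q)) :=
          mul_le_mul_of_nonneg_left (geom_sum_Ico_le_of_lt_one hq₀ hq₁) hC

theorem _root_.GConvergesTo.tendsto_G_left {x : ℕ → X} {u : X} (hx : GConvergesTo GM x u) :
    Tendsto (fun n => GM.G (x n) u u) atTop (𝓝 0) := by
  refine squeeze_zero (fun _ => GM.nonneg _ _ _) (fun n => ?_) (by simpa using hx.const_mul 2)
  rw [GM.G_comm_left (x n) u, ← GM.G_comm_left u (x n)]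
  exact GM.G_le_two_mul u (x n)


variable {GM}

def IsSumFormContraction (GM : GMetricStruct X) (a β : ℝ) (T : X → X) : Prop :=
  ∀ x y z : X, GM.G (T x) (T y) (T z) ≤
    a * GM.G x y z + β * (GM.G y (T y) (T y) + GM.G z (T z) (T z) + GM.G x (T x) (T x))

namespace IsSumFormContraction

variable {a β : ℝ} {T : X → X}

theorem G_map_succ_le (hT : GM.IsSumFormContraction a β T) (x : X) :
    (1 - 2 * β) * GM.G (T x) (T (T x)) (T (T x)) ≤ (a + β) * GM.G x (T x) (T x) := by
  linarith [hT x (T x) (T x)]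

theorem gCauchySeq_iterate (hT : GM.IsSumFormContraction a β T) (haβ : 0 ≤ a + β)
    (hab : a + 3 * β < 1) (x₀ : X) : GCauchySeq GM fun n => T^[n] x₀ := by
  have h2β : 0 < 1 - 2 * β := by linarith
  set q := (a + β) / (1 - 2 * β)
  have hq₀ : 0 ≤ q := div_nonneg haβ h2β.le
  have hq₁ : q < 1 := by rw [div_lt_one h2β]; linarith
  refine GM.gCauchySeq_of_G_succ_le_geometric (C := GM.G x₀ (T x₀) (T x₀)) hq₀ hq₁ fun n => ?_
  rw [mul_comm]
  refine le_geom (u := fun n => GM.G (T^[n] x₀) (T^[n + 1] x₀) (T^[n + 1] x₀)) hq₀ n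
    fun k _ => ?_
  simp only [Function.iterate_succ_apply']
  rw [div_mul_eq_mul_div, le_div_iff₀ h2β, mul_comm]
  exact hT.G_map_succ_le _

theorem map_eq_self_of_gConvergesTo (hT : GM.IsSumFormContraction a β T) (h2β : 2 * β < 1)
    {x : ℕ → X} (hx : ∀ n, x (n + 1) = T (x n)) {u : X} (hu : GConvergesTo GM x u) :
    T u = u := by
  have hu' : Tendsto (fun n => GM.G (x n) u u) atTop (𝓝 0) := hu.tendsto_G_left
  have hsucc : GConvergesTo GM (fun n => x (n + 1)) u := hu.comp (tendsto_add_atTop_nat 1)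
  have hdist : Tendsto (fun n => GM.G (x n) (x (n + 1)) (x (n + 1))) atTop (𝓝 0) := by
    refine squeeze_zero (fun _ => GM.nonneg _ _ _) (fun n => ?_) (by simpa using hu'.add hsucc)
    have := GM.rect (x n) (x (n + 1)) (x (n + 1)) u
    rwa [GM.G_comm_left u] at this
  have hbound : ∀ n, (1 - 2 * β) * GM.G u (T u) (T u) ≤ GM.G (x (n + 1)) (x (n + 1)) u
      + a * GM.G (x n) u u + β * GM.G (x n) (x (n + 1)) (x (n + 1)) := by
    intro n
    have hrect := GM.rect u (T u) (T u) (x (n + 1))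
    rw [GM.G_comm_left u (x (n + 1))] at hrect
    have hstep := hT (x n) u u
    rw [← hx n] at hstep
    linarith
  have hnonpos : GM.G u (T u) (T u) ≤ 0 := by
    have := ge_of_tendsto' (by simpa using (hsucc.add (hu'.const_mul a)).add (hdist.const_mul β))
      hbound
    nlinarith [GM.nonneg u (T u) (T u)]
  exact GM.eq_of_G_nonpos (GM.G_comm_left u (T u) ▸ hnonpos)

theorem eq_of_map_eq_self (hT : GM.IsSumFormContraction a β T) (ha : a < 1) {u v : X}
    (hu : T u = u) (hv : T v = v) : v = u := by
  have h := hT v v u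
  rw [hu, hv, GM.G_self, GM.G_self] at h
  exact GM.eq_of_G_nonpos (by nlinarith [GM.nonneg v v u])

theorem gContinuousAt (hT : GM.IsSumFormContraction a β T) (h2β : 2 * β < 1) {u : X}
    (hu : T u = u) : GContinuousAt GM T u := by
  intro y hy
  have hdist : Tendsto (fun n => GM.G (y n) (T (y n)) (T (y n))) atTop (𝓝 0) := by
    refine squeeze_zero (fun _ => GM.nonneg _ _ _) (fun n => ?_)
      (by simpa using (hy.tendsto_G_left.add (hy.const_mul a)).div_const (1 - 2 * β))
    have hrect := GM.rect (y n) (T (y n)) (T (y n)) u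
    have hstep := hT u (y n) (y n)
    rw [hu, GM.G_self, GM.G_comm_left u (y n)] at hstep
    rw [le_div_iff₀ (by linarith)]
    linarith
  refine squeeze_zero (fun _ => GM.nonneg _ _ _) (fun n => hT (y n) (y n) u) ?_
  simpa [hu, GM.G_self] using (hy.const_mul a).add ((hdist.add hdist).const_mul β)

end IsSumFormContraction

end GMetricStruct

theorem fixed_point_sum_form {X : Type*} [Nonempty X] (GM : GMetricStruct X)
    (hcomp : GComplete GM) (T : X → X)
    (a β : ℝ) (ha : 0 ≤ a) (hβ : 0 ≤ β) (hab : a + 3 * β < 1)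
    (hT : ∀ x y z : X, GM.G (T x) (T y) (T z) ≤
      a * GM.G x y z + β * (GM.G y (T y) (T y) + GM.G z (T z) (T z)
        + GM.G x (T x) (T x))) :
    ∃ u : X, T u = u ∧ (∀ v : X, T v = v → v = u) ∧ GContinuousAt GM T u := by
  have hT' : GM.IsSumFormContraction a β T := hT
  obtain ⟨x₀⟩ := ‹Nonempty X›
  obtain ⟨u, hu⟩ := hcomp _ (hT'.gCauchySeq_iterate (by linarith) hab x₀)
  have hfix : T u = u :=
    hT'.map_eq_self_of_gConvergesTo (by linarith) (fun n => Function.iterate_succ_apply' T n x₀) hu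
  exact ⟨u, hfix, fun v hv => hT'.eq_of_map_eq_self (by linarith) hfix hv,
    hT'.gContinuousAt (by linarith) hfix⟩
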